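/- arXiv:1701.00546 — 2 statements merged into one kernel-verified Lean document; each statement's English description precedes it below -/
import Mathlib

section
/- Let G be a finite undirected simple graph, let u and v be distinct non-adjacent vertices with k_G(u) > k_G(v), and let G' = G + (u,v) be the graph obtained by inserting the edge (u,v). If w is any vertex whose coreness changes after the insertion, i.e., k_{G'}(w) ≠ k_G(w), then w is k-reachable from v in the original graph G with k = k_G(v): there is a path from v to w in G all of whose vertices (including v and w) have G-coreness equal to k_G(v). -/
/-!
Let `k = k_G(w)`. Coreness can only grow, so `k_{G'}(w) ≥ k + 1`, witnessed by a set `C ∋ w` of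
minimum `G'`-degree `k + 1`. Deleting the new edge costs each vertex at most one neighbour, so
every vertex of `C` has `G`-coreness at least `k`; and `C` must contain `v`, otherwise it would
already witness `k_G(w) ≥ k + 1`. If `k_G(v) > k`, then `u` and `v` both lie in the
`(k + 1)`-core, and `C` together with that core would witness `k_G(w) ≥ k + 1`; so `k_G(v) = k`.
Finally let `B` be the set of vertices joined to `w` inside `{x ∈ C | k_G(x) = k}`. If `v ∉ B`,
the vertices of `B` avoid both `u` and `v`, so they keep their `k + 1` neighbours in `C`, each of
which lies in `B` or in the `(k + 1)`-core; again `w` would have `G`-coreness at least `k + 1`.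
-/

noncomputable def degOn {V : Type*} (G : SimpleGraph V) (C : Set V) (u : V) : ℕ :=
  {v ∈ C | G.Adj u v}.ncard

noncomputable def coreness {V : Type*} (G : SimpleGraph V) (u : V) : ℕ :=
  sSup {k : ℕ | ∃ C : Set V, u ∈ C ∧ ∀ w ∈ C, k ≤ degOn G C w}

def HasMinDegOn {V : Type*} (G : SimpleGraph V) (C : Set V) (k : ℕ) : Prop :=
  ∀ x ∈ C, k ≤ degOn G C x

def core {V : Type*} (G : SimpleGraph V) (k : ℕ) : Set V := {x | k ≤ coreness G x}

section Coreness

variable {V : Type*} [Finite V] {G G' : SimpleGraph V}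

lemma degOn_mono {C D : Set V} (h : C ⊆ D) (x : V) : degOn G C x ≤ degOn G D x :=
  Set.ncard_le_ncard fun _ hy => ⟨h hy.1, hy.2⟩

lemma degOn_le_degOn_of_adj {C : Set V} {x : V} (h : ∀ y ∈ C, G'.Adj x y → G.Adj x y) :
    degOn G' C x ≤ degOn G C x :=
  Set.ncard_le_ncard fun y hy => ⟨hy.1, h y hy.1 hy.2⟩

lemma bddAbove_coreness_set (G : SimpleGraph V) (x : V) :
    BddAbove {k : ℕ | ∃ C : Set V, x ∈ C ∧ ∀ w ∈ C, k ≤ degOn G C w} :=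
  ⟨Nat.card V, fun _ ⟨_, hx, hC⟩ => (hC x hx).trans (Set.ncard_le_card _)⟩

lemma le_coreness {x : V} {k : ℕ} {C : Set V} (hC : HasMinDegOn G C k) (hx : x ∈ C) :
    k ≤ coreness G x :=
  le_csSup (bddAbove_coreness_set G x) ⟨C, hx, hC⟩

lemma exists_hasMinDegOn_of_le_coreness {x : V} {k : ℕ} (h : k ≤ coreness G x) :
    ∃ C : Set V, x ∈ C ∧ HasMinDegOn G C k := by
  obtain ⟨C, hx, hC⟩ : coreness G x ∈ {k : ℕ | ∃ C : Set V, x ∈ C ∧ HasMinDegOn G C k} :=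
    Nat.sSup_mem ⟨0, {x}, rfl, fun _ _ => Nat.zero_le _⟩ (bddAbove_coreness_set G x)
  exact ⟨C, hx, fun w hw => h.trans (hC w hw)⟩

lemma coreness_mono (h : G ≤ G') (x : V) : coreness G x ≤ coreness G' x := by
  obtain ⟨C, hx, hC⟩ := exists_hasMinDegOn_of_le_coreness (le_refl (coreness G x))
  exact le_coreness (fun y hy => (hC y hy).trans (degOn_le_degOn_of_adj fun _ _ hy => h hy)) hx

lemma hasMinDegOn_core (G : SimpleGraph V) (k : ℕ) : HasMinDegOn G (core G k) k := by
  intro x hx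
  obtain ⟨C, hxC, hC⟩ := exists_hasMinDegOn_of_le_coreness hx
  exact (hC x hxC).trans (degOn_mono (fun _ hy => le_coreness hC hy) x)

lemma le_coreness_of_le_degOn_union_core {D : Set V} {k : ℕ}
    (hD : ∀ x ∈ D, coreness G x < k → k ≤ degOn G (D ∪ core G k) x) {x : V}
    (hx : x ∈ D) : k ≤ coreness G x := by
  refine le_coreness (fun y hy => ?_) (Set.mem_union_left (core G k) hx)
  by_cases hyk : y ∈ core G k
  · exact (hasMinDegOn_core G k y hyk).trans (degOn_mono Set.subset_union_right y)
  · exact hD y (hy.resolve_right hyk) (not_le.1 hyk)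

end Coreness

section EdgeInsertion

open SimpleGraph

variable {V : Type*} {G G' : SimpleGraph V} {u v : V} {C : Set V} {k : ℕ}

lemma adj_or_of_le_sup_edge (hG' : G' ≤ G ⊔ edge u v) {x y : V} (h : G'.Adj x y) :
    G.Adj x y ∨ (x = u ∧ y = v) ∨ (x = v ∧ y = u) := by
  have := hG' h
  rw [sup_adj, edge_adj] at this
  tauto

variable [Finite V]

lemma degOn_le_degOn_add_one (hG' : G' ≤ G ⊔ edge u v) (x : V) :
    degOn G' C x ≤ degOn G C x + 1 := by
  obtain ⟨z, hz⟩ : ∃ z, ∀ y, G'.Adj x y → G.Adj x y ∨ y = z := by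
    by_cases hxu : x = u
    · refine ⟨v, fun y h => ?_⟩
      rcases adj_or_of_le_sup_edge hG' h with h | ⟨-, rfl⟩ | ⟨rfl, rfl⟩ <;> simp_all
    · refine ⟨u, fun y h => ?_⟩
      rcases adj_or_of_le_sup_edge hG' h with h | ⟨rfl, -⟩ | ⟨-, rfl⟩ <;> simp_all
  calc degOn G' C x ≤ (insert z {y ∈ C | G.Adj x y}).ncard :=
        Set.ncard_le_ncard fun y ⟨hy, hxy⟩ =>
          (hz y hxy).elim (fun h => Or.inr ⟨hy, h⟩) Or.inl
    _ ≤ degOn G C x + 1 := Set.ncard_insert_le _ _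

lemma degOn_le_degOn_of_ne (hG' : G' ≤ G ⊔ edge u v) {x : V} (hxu : x ≠ u) (hxv : x ≠ v) :
    degOn G' C x ≤ degOn G C x :=
  degOn_le_degOn_of_adj fun y _ h => by
    rcases adj_or_of_le_sup_edge hG' h with h | ⟨rfl, -⟩ | ⟨rfl, -⟩ <;> simp_all

lemma le_coreness_of_hasMinDegOn_succ (hG' : G' ≤ G ⊔ edge u v)
    (hC : HasMinDegOn G' C (k + 1)) {x : V} (hx : x ∈ C) : k ≤ coreness G x :=
  le_coreness (fun y hy => by
    have := hC y hy
    have := degOn_le_degOn_add_one hG' (C := C) y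
    omega) hx

lemma mem_of_hasMinDegOn_succ (hG' : G' ≤ G ⊔ edge u v)
    (hC : HasMinDegOn G' C (k + 1)) {w : V} (hw : w ∈ C) (hwk : coreness G w ≤ k) :
    v ∈ C := by
  by_contra hv
  have hGC (x : V) (hx : x ∈ C) : degOn G' C x ≤ degOn G C x :=
    degOn_le_degOn_of_adj fun y hy h => by
      rcases adj_or_of_le_sup_edge hG' h with h | ⟨-, rfl⟩ | ⟨rfl, -⟩ <;> simp_all
  have : k + 1 ≤ coreness G w := le_coreness (fun x hx => (hC x hx).trans (hGC x hx)) hw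
  omega

lemma coreness_le_of_hasMinDegOn_succ (hG' : G' ≤ G ⊔ edge u v)
    (hC : HasMinDegOn G' C (k + 1)) {w : V} (hw : w ∈ C) (hwk : coreness G w ≤ k)
    (hvu : coreness G v < coreness G u) : coreness G v ≤ k := by
  by_contra! hkv
  suffices k + 1 ≤ coreness G w by omega
  refine le_coreness_of_le_degOn_union_core (fun x hx hxk => ?_) hw
  have hxu : x ≠ u := by rintro rfl; omega
  have hxv : x ≠ v := by rintro rfl; omega
  calc k + 1 ≤ degOn G' C x := hC x hx
    _ ≤ degOn G C x := degOn_le_degOn_of_ne hG' hxu hxv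
    _ ≤ degOn G (C ∪ core G (k + 1)) x := degOn_mono Set.subset_union_left x

lemma exists_walk_of_hasMinDegOn_succ (hG' : G' ≤ G ⊔ edge u v)
    (hC : HasMinDegOn G' C (k + 1)) {w : V} (hw : w ∈ C) (hwk : coreness G w ≤ k)
    (hku : k < coreness G u) : ∃ p : G.Walk w v, ∀ y ∈ p.support, coreness G y = k := by
  set S := {x ∈ C | coreness G x = k}
  set B := {x | ∃ p : G.Walk w x, ∀ y ∈ p.support, y ∈ S}
  suffices hvB : v ∈ B by
    obtain ⟨p, hp⟩ := hvB
    exact ⟨p, fun y hy => (hp y hy).2⟩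
  have hwS : w ∈ S := ⟨hw, le_antisymm hwk (le_coreness_of_hasMinDegOn_succ hG' hC hw)⟩
  by_contra hvB
  have hwB : w ∈ B := ⟨.nil, fun y hy => by simp_all⟩
  suffices k + 1 ≤ coreness G w by omega
  refine le_coreness_of_le_degOn_union_core (fun x hx _ => ?_) hwB
  obtain ⟨p, hp⟩ := hx
  obtain ⟨hxC, hxk⟩ := hp x p.end_mem_support
  have hxu : x ≠ u := by rintro rfl; omega
  have hxv : x ≠ v := by rintro rfl; exact hvB ⟨p, hp⟩
  have hCB : {y ∈ C | G.Adj x y} ⊆ {y ∈ B ∪ core G (k + 1) | G.Adj x y} := by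
    rintro y ⟨hyC, hxy⟩
    refine ⟨?_, hxy⟩
    rcases (le_coreness_of_hasMinDegOn_succ hG' hC hyC).eq_or_lt with hyk | hyk
    · refine Or.inl ⟨p.concat hxy, fun z hz => ?_⟩
      rw [Walk.support_concat, List.mem_append, List.mem_singleton] at hz
      rcases hz with hz | rfl
      exacts [hp z hz, ⟨hyC, hyk.symm⟩]
    · exact Or.inr hyk
  calc k + 1 ≤ degOn G' C x := hC x hxC
    _ ≤ degOn G C x := degOn_le_degOn_of_ne hG' hxu hxv
    _ ≤ degOn G (B ∪ core G (k + 1)) x := Set.ncard_le_ncard hCB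

end EdgeInsertion

theorem candidate_of_insert_gt_general {V : Type*} [Fintype V] (G G' : SimpleGraph V)
    (u v : V)
    (hG' : ∀ a b, G'.Adj a b ↔ G.Adj a b ∨ (a = u ∧ b = v) ∨ (a = v ∧ b = u))
    (hk : coreness G v < coreness G u)
    (w : V) (hw : coreness G' w ≠ coreness G w) :
    ∃ p : G.Walk v w, p.IsPath ∧ ∀ x ∈ p.support, coreness G x = coreness G v := by
  classical
  have hsup : G' ≤ G ⊔ SimpleGraph.edge u v := fun a b h => by
    rw [SimpleGraph.sup_adj, SimpleGraph.edge_adj]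
    have := (hG' a b).1 h
    exact this.imp_right fun h' => ⟨h', h.ne⟩
  have hGG' : G ≤ G' := fun a b h => (hG' a b).2 (Or.inl h)
  obtain ⟨C, hwC, hC⟩ := exists_hasMinDegOn_of_le_coreness
    ((coreness_mono hGG' w).lt_of_ne hw.symm : coreness G w + 1 ≤ coreness G' w)
  have hvC := mem_of_hasMinDegOn_succ hsup hC hwC le_rfl
  have hvw : coreness G v = coreness G w :=
    le_antisymm (coreness_le_of_hasMinDegOn_succ hsup hC hwC le_rfl hk)
      (le_coreness_of_hasMinDegOn_succ hsup hC hvC)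
  obtain ⟨p, hp⟩ := exists_walk_of_hasMinDegOn_succ hsup hC hwC le_rfl (hvw ▸ hk)
  refine ⟨p.reverse.bypass, p.reverse.bypass_isPath, fun x hx => ?_⟩
  have hx' := p.reverse.support_bypass_subset_support hx
  rw [SimpleGraph.Walk.support_reverse, List.mem_reverse] at hx'
  rw [hvw]
  exact hp x hx'

/-- If the edge `(u,v)` with `k_G(u) > k_G(v)` is inserted, then every vertex `w` whose
coreness changes is `k`-reachable from `v` in the original graph `G` with `k = k_G(v)`:
there is a path from `v` to `w` in `G` all of whose vertices have coreness `k_G(v)`. -/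
theorem candidate_of_insert_gt {V : Type*} [Fintype V] (G G' : SimpleGraph V)
    (u v : V) (huv : u ≠ v) (hna : ¬ G.Adj u v)
    (hG' : ∀ a b, G'.Adj a b ↔ G.Adj a b ∨ (a = u ∧ b = v) ∨ (a = v ∧ b = u))
    (hk : coreness G v < coreness G u)
    (w : V) (hw : coreness G' w ≠ coreness G w) :
    ∃ p : G.Walk v w, p.IsPath ∧ ∀ x ∈ p.support, coreness G x = coreness G v :=
  candidate_of_insert_gt_general G G' u v hG' hk w hw
end

section
/- Let G be a finite undirected simple graph, let u and v be distinct non-adjacent vertices, and let G' = G + (u,v) be the graph obtained by inserting the edge (u,v). A maximal clique C of G fails to be a maximal clique of G' if and only if C contains u or v, and C ⊆ (N_G(u) ∩ N_G(v)) ∪ {u, v}, where N_G(x) denotes the set of neighbors of x in G. -/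
/-!
Write `H = G ⊔ edge u v`. A clique of `H` containing at most one of `u`, `v` is already a clique
of `G`, so a clique `D ⊋ C` of `H` contains both `u` and `v`, and each of its other vertices is
adjacent in `G` to both of them. If moreover `u ∉ C`, maximality of `C` in `G` forces
`C = D \ {u}`, which contains `v`. Conversely, if `C ⊆ N(u) ∩ N(v) ∪ {u, v}` then `C ∪ {u, v}`
is a clique of `H`, strictly larger than `C` because `u` and `v` are not adjacent in `G`.
-/

/-- `C` is a maximal clique of `G`: `C` is a clique and no strict superset of `C`
is a clique of `G`. -/
def IsMaxClique {V : Type*} (G : SimpleGraph V) (C : Set V) : Prop :=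
  G.IsClique C ∧ ∀ D : Set V, C ⊂ D → ¬ G.IsClique D

theorem isMaxClique_iff_maximal {V : Type*} (G : SimpleGraph V) (C : Set V) :
    IsMaxClique G C ↔ Maximal G.IsClique C := by
  rw [Set.maximal_iff_forall_ssuperset]
  rfl

theorem Set.ssubset_insert_insert {α : Type*} {a b : α} {s : Set α}
    (h : ¬(a ∈ s ∧ b ∈ s)) : s ⊂ insert a (insert b s) := by
  rcases not_and_or.1 h with ha | hb
  · exact (ssubset_insert ha).trans_subset (insert_subset_insert (subset_insert _ _))
  · exact (ssubset_insert hb).trans_subset (subset_insert _ _)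

namespace SimpleGraph

variable {V : Type*} {G : SimpleGraph V} {u v a b : V} {s : Set V}

theorem eq_sup_edge_of_adj_iff {G' : SimpleGraph V} (huv : u ≠ v)
    (h : ∀ a b, G'.Adj a b ↔ G.Adj a b ∨ (a = u ∧ b = v) ∨ (a = v ∧ b = u)) :
    G' = G ⊔ edge u v := by
  ext a b
  rw [h, sup_adj, edge_adj]
  constructor
  · rintro (hab | ⟨rfl, rfl⟩ | ⟨rfl, rfl⟩)
    · exact Or.inl hab
    · exact Or.inr ⟨Or.inl ⟨rfl, rfl⟩, huv⟩
    · exact Or.inr ⟨Or.inr ⟨rfl, rfl⟩, huv.symm⟩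
  · rintro (hab | ⟨hab, -⟩)
    exacts [Or.inl hab, Or.inr hab]

theorem Adj.of_sup_edge_of_ne (h : (G ⊔ edge u v).Adj a b) (hbu : b ≠ u) (hbv : b ≠ v) :
    G.Adj a b := by
  simp_all [sup_adj, edge_adj]

theorem IsClique.mem_left_of_sup_edge (hs : (G ⊔ edge u v).IsClique s) (hG : ¬G.IsClique s) :
    u ∈ s := by
  by_contra hu
  exact hG (by simpa [hu] using hs.sdiff_of_sup_edge)

theorem IsClique.mem_right_of_sup_edge (hs : (G ⊔ edge u v).IsClique s) (hG : ¬G.IsClique s) :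
    v ∈ s :=
  (edge_comm u v ▸ hs).mem_left_of_sup_edge hG

theorem IsClique.subset_commonNeighbors_of_sup_edge (hs : (G ⊔ edge u v).IsClique s)
    (hu : u ∈ s) (hv : v ∈ s) : s ⊆ G.commonNeighbors u v ∪ {u, v} := by
  intro x hx
  by_cases hxuv : x = u ∨ x = v
  · exact Or.inr hxuv
  obtain ⟨hxu, hxv⟩ := not_or.1 hxuv
  exact Or.inl ⟨(hs hu hx (Ne.symm hxu)).of_sup_edge_of_ne hxu hxv,
    (hs hv hx (Ne.symm hxv)).of_sup_edge_of_ne hxu hxv⟩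

theorem isClique_insert_insert_sup_edge (huv : u ≠ v) (hs : G.IsClique s)
    (hsub : s ⊆ G.commonNeighbors u v ∪ {u, v}) :
    (G ⊔ edge u v).IsClique (insert u (insert v s)) := by
  have hadj : ∀ x ∈ ({u, v} : Set V), ∀ y ∈ s, x ≠ y → (G ⊔ edge u v).Adj x y := by
    rintro x hx y hy hxy
    rcases hsub hy with ⟨hyu, hyv⟩ | hy'
    · rcases hx with rfl | rfl
      exacts [Or.inl hyu, Or.inl hyv]
    · refine Or.inr ((edge_adj _ _ _ _).2 ⟨?_, hxy⟩)
      rcases hx with rfl | rfl <;> rcases hy' with rfl | rfl <;> simp_all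
  rw [isClique_insert, isClique_insert]
  refine ⟨⟨hs.mono le_sup_left, hadj v (Or.inr rfl)⟩, ?_⟩
  rintro y (rfl | hy) hxy
  · exact Or.inr ((edge_adj _ _ _ _).2 ⟨Or.inl ⟨rfl, rfl⟩, huv⟩)
  · exact hadj u (Or.inl rfl) y hy hxy

theorem not_maximal_isClique_sup_edge_iff (huv : u ≠ v) (hna : ¬G.Adj u v)
    (hs : Maximal G.IsClique s) :
    ¬Maximal (G ⊔ edge u v).IsClique s ↔
      (u ∈ s ∨ v ∈ s) ∧ s ⊆ G.commonNeighbors u v ∪ {u, v} := by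
  constructor
  · intro hnot
    obtain ⟨t, hst, ht⟩ := (not_maximal_iff_exists_gt (hs.prop.mono le_sup_left)).1 hnot
    have htG : ¬G.IsClique t := hs.not_prop_of_ssuperset hst
    have hut := ht.mem_left_of_sup_edge htG
    have hvt := ht.mem_right_of_sup_edge htG
    refine ⟨or_iff_not_imp_left.2 fun hus => ?_,
      hst.subset.trans (ht.subset_commonNeighbors_of_sup_edge hut hvt)⟩
    have hst' : s = t \ {u} := hs.eq_of_subset ht.sdiff_of_sup_edge
      fun x hx => ⟨hst.subset hx, fun hxu => hus (hxu ▸ hx)⟩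
    exact hst' ▸ ⟨hvt, huv.symm⟩
  · rintro ⟨-, hsub⟩ hmax
    have huvs : ¬(u ∈ s ∧ v ∈ s) := fun ⟨hu, hv⟩ => hna (hs.prop hu hv huv)
    exact hmax.not_prop_of_ssuperset (Set.ssubset_insert_insert huvs)
      (isClique_insert_insert_sup_edge huv hs.prop hsub)

end SimpleGraph

theorem maxClique_not_maximal_after_insert_iff_general {V : Type*}
    (G G' : SimpleGraph V) (u v : V) (huv : u ≠ v) (hna : ¬ G.Adj u v)
    (hG' : ∀ a b, G'.Adj a b ↔ G.Adj a b ∨ (a = u ∧ b = v) ∨ (a = v ∧ b = u))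
    (C : Set V) (hC : IsMaxClique G C) :
    ¬ IsMaxClique G' C ↔
      (u ∈ C ∨ v ∈ C) ∧ C ⊆ (G.neighborSet u ∩ G.neighborSet v) ∪ {u, v} := by
  obtain rfl := SimpleGraph.eq_sup_edge_of_adj_iff huv hG'
  rw [isMaxClique_iff_maximal] at hC ⊢
  exact SimpleGraph.not_maximal_isClique_sup_edge_iff huv hna hC

/-- After inserting the edge `(u,v)` between distinct non-adjacent vertices, a maximal
clique `C` of `G` fails to be a maximal clique of the new graph `G'` if and only if `C`
contains `u` or `v` and `C ⊆ (N_G(u) ∩ N_G(v)) ∪ {u, v}`. -/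
theorem maxClique_not_maximal_after_insert_iff {V : Type*} [Fintype V]
    (G G' : SimpleGraph V) (u v : V) (huv : u ≠ v) (hna : ¬ G.Adj u v)
    (hG' : ∀ a b, G'.Adj a b ↔ G.Adj a b ∨ (a = u ∧ b = v) ∨ (a = v ∧ b = u))
    (C : Set V) (hC : IsMaxClique G C) :
    ¬ IsMaxClique G' C ↔
      (u ∈ C ∨ v ∈ C) ∧ C ⊆ (G.neighborSet u ∩ G.neighborSet v) ∪ {u, v} :=
  maxClique_not_maximal_after_insert_iff_general G G' u v huv hna hG' C hC
end
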